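/- arXiv:2502.08516 — 5 statements merged into one kernel-verified Lean document; each statement's English description precedes it below -/
import Mathlib

section
/- Let φ satisfy ‖∇ₓ²φ(τ,·)‖_∞ ≤ δ(1+τ)^{-5/2} for all τ ≥ 0, and let (X(s;t,x,v), V(s;t,x,v)) solve dX/ds = V, dV/ds = ∓∇ₓφ(s,X) with X(t)=x, V(t)=v. Then for all 0 ≤ s ≤ t, |∂X(s)/∂v + (t−s)·Id| + |∂V(s)/∂v − Id| ≤ Cδ(t−s), where Id is the 3×3 identity matrix and C is independent of t, s, x, v. -/
/-!
Write `A = ∂X/∂v`, `B = ∂V/∂v`, so that `A' = B`, `‖B'‖ ≤ k ‖A‖` with `k u = δ (1 + u)^(-5/2)`,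
`A t = 0` and `B t = Id`. Integrating once and twice from `t` gives
`‖B s - Id‖ ≤ ∫ u in s..t, k u ‖A u‖` and `‖A s + (t - s) Id‖ ≤ ∫ u in s..t, (u - s) k u ‖A u‖`.
For `0 ≤ s` both weights are at most `(1 + u) k u = δ (1 + u)^(-3/2)`, whose integral over
`[0, ∞)` is `2 δ`. Hence `‖A u‖ ≤ (t - s) + ∫ r in u..t, (1 + r) k r ‖A r‖` on `[s, t]`, and a
backward Gronwall inequality gives `‖A‖ ≤ e^(2δ) (t - s)` there; substituting this back bounds both
errors by `2 δ e^(2δ) (t - s)`.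
-/

open Set Real intervalIntegral MeasureTheory

lemma ContinuousOn.exists_continuous_eqOn_Icc {α β : Type*} [LinearOrder α] [TopologicalSpace α]
    [OrderTopology α] [TopologicalSpace β] {f : α → β} {a b : α} (hab : a ≤ b)
    (hf : ContinuousOn f (Icc a b)) : ∃ F : α → β, Continuous F ∧ EqOn F f (Icc a b) :=
  ⟨fun x => f (projIcc a b hab x),
    hf.comp_continuous (continuous_subtype_val.comp continuous_projIcc) fun x =>
      (projIcc a b hab x).2,
    fun x hx => by simp only [projIcc_of_mem hab hx]⟩

lemma Continuous.hasDerivAt_integral_left {G : Type*} [NormedAddCommGroup G] [NormedSpace ℝ G]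
    [CompleteSpace G] {f : ℝ → G} (hf : Continuous f) (b x : ℝ) :
    HasDerivAt (fun a => ∫ u in a..b, f u) (-f x) x :=
  integral_hasDerivAt_left (hf.intervalIntegrable x b) (hf.stronglyMeasurableAtFilter _ _)
    hf.continuousAt

lemma le_mul_exp_integral_of_le_add_integral {a b α : ℝ} {W c : ℝ → ℝ} (hW : Continuous W)
    (hc : Continuous c) (hc0 : ∀ u ∈ Icc a b, 0 ≤ c u)
    (hle : ∀ s ∈ Icc a b, W s ≤ α + ∫ u in s..b, c u * W u) :
    ∀ s ∈ Icc a b, W s ≤ α * exp (∫ u in s..b, c u) := by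
  set G := fun s => α + ∫ u in s..b, c u * W u
  set J := fun s => ∫ u in s..b, c u
  have hZ : ∀ y, HasDerivAt (fun s => G s * exp (-J s))
      (c y * exp (-J y) * (G y - W y)) y := fun y => by
    have hG : HasDerivAt G (-(c y * W y)) y :=
      ((hc.mul hW).hasDerivAt_integral_left b y).const_add α
    have hJ : HasDerivAt (fun s => exp (-J s)) (exp (-J y) * c y) y := by
      simpa using (hc.hasDerivAt_integral_left b y).neg.exp
    exact (hG.mul hJ).congr_deriv (by ring)
  -- `G · exp (-J)` is nondecreasing because `G' = -c W ≥ -c G`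
  have hmono : MonotoneOn (fun s => G s * exp (-J s)) (Icc a b) :=
    monotoneOn_of_hasDerivWithinAt_nonneg (convex_Icc a b)
      (fun y _ => (hZ y).continuousAt.continuousWithinAt) (fun y _ => (hZ y).hasDerivWithinAt)
      fun y hy => by
        rw [interior_Icc] at hy
        have hy' := Ioo_subset_Icc_self hy
        exact mul_nonneg (mul_nonneg (hc0 y hy') (exp_pos _).le) (sub_nonneg.2 (hle y hy'))
  intro s hs
  have hZs : G s * exp (-J s) ≤ α := by
    simpa [G, J] using hmono hs (right_mem_Icc.2 (hs.1.trans hs.2)) hs.2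
  calc W s ≤ G s := hle s hs
    _ ≤ α * exp (J s) := by
      rwa [exp_neg, ← div_eq_mul_inv, div_le_iff₀ (exp_pos _)] at hZs

lemma integral_integral_eq_integral_sub_mul {g : ℝ → ℝ} (hg : Continuous g) (s t : ℝ) :
    ∫ u in s..t, ∫ r in u..t, g r = ∫ u in s..t, (u - s) * g u := by
  have h := integral_mul_deriv_eq_deriv_mul (a := s) (b := t) (v := fun u => u - s)
    (v' := fun _ => 1)
    (fun x _ => hg.hasDerivAt_integral_left t x) (fun x _ => (hasDerivAt_id x).sub_const s)
    (hg.neg.intervalIntegrable s t) intervalIntegrable_const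
  simp only [mul_one, integral_same, sub_self, mul_zero, zero_mul, neg_mul,
    intervalIntegral.integral_neg] at h
  rw [h, zero_sub, neg_neg]
  exact integral_congr fun u _ => mul_comm _ _

lemma le_mul_exp_of_le_mul_sub_add_integral {a t β m : ℝ} {W c : ℝ → ℝ} (hW : Continuous W)
    (hc : Continuous c) (hc0 : ∀ u ∈ Icc a t, 0 ≤ c u) (hm : ∀ s ∈ Icc a t, ∫ u in s..t, c u ≤ m)
    (hβ : 0 ≤ β) (hle : ∀ u ∈ Icc a t, W u ≤ β * (t - u) + ∫ r in u..t, c r * W r) :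
    ∀ s ∈ Icc a t, W s ≤ β * (t - s) * exp m := by
  intro s hs
  have sub_Icc : Icc s t ⊆ Icc a t := Icc_subset_Icc_left hs.1
  have h := le_mul_exp_integral_of_le_add_integral (α := β * (t - s)) hW hc
    (fun u hu => hc0 u (sub_Icc hu))
    (fun u hu => (hle u (sub_Icc hu)).trans <| by gcongr; exact hu.1) s (left_mem_Icc.2 hs.2)
  have hts : 0 ≤ t - s := sub_nonneg.2 hs.2
  exact h.trans (by gcongr; exact hm s hs)

lemma integral_mul_le_of_le_mul_sub_add_integral {a t β m : ℝ} {W c : ℝ → ℝ} (hW : Continuous W)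
    (hc : Continuous c) (hc0 : ∀ u ∈ Icc a t, 0 ≤ c u) (hm : ∀ s ∈ Icc a t, ∫ u in s..t, c u ≤ m)
    (hβ : 0 ≤ β) (hle : ∀ u ∈ Icc a t, W u ≤ β * (t - u) + ∫ r in u..t, c r * W r) :
    ∀ s ∈ Icc a t, ∫ u in s..t, c u * W u ≤ m * exp m * β * (t - s) := by
  intro s hs
  have sub_Icc : Icc s t ⊆ Icc a t := Icc_subset_Icc_left hs.1
  have hC : 0 ≤ β * (t - s) * exp m := by have := hs.2; positivity
  calc ∫ u in s..t, c u * W u ≤ ∫ u in s..t, β * (t - s) * exp m * c u :=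
        integral_mono_on hs.2 ((hc.mul hW).intervalIntegrable s t)
          ((hc.const_mul _).intervalIntegrable s t) fun u hu => by
            rw [mul_comm _ (c u)]
            refine mul_le_mul_of_nonneg_left ?_ (hc0 u (sub_Icc hu))
            calc W u ≤ β * (t - u) * exp m :=
                  le_mul_exp_of_le_mul_sub_add_integral hW hc hc0 hm hβ hle u (sub_Icc hu)
              _ ≤ β * (t - s) * exp m := by gcongr; exact hu.1
    _ = β * (t - s) * exp m * ∫ u in s..t, c u := integral_const_mul _ _
    _ ≤ β * (t - s) * exp m * m := mul_le_mul_of_nonneg_left (hm s hs) hC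
    _ = m * exp m * β * (t - s) := by ring

section SecondOrder

variable {G : Type*} [NormedAddCommGroup G] [NormedSpace ℝ G]

lemma norm_sub_le_integral_of_hasDerivAt {f f' : ℝ → G} {g : ℝ → ℝ} {a b : ℝ} (hab : a ≤ b)
    (hf : ∀ x ∈ Icc a b, HasDerivAt f (f' x) x) (hg : IntervalIntegrable g volume a b)
    (hf'g : ∀ x ∈ Icc a b, ‖f' x‖ ≤ g x) :
    ‖f b - f a‖ ≤ ∫ x in a..b, g x :=
  norm_sub_le_integral_of_norm_deriv_le_of_le hab
    (fun x hx => (hf x hx).continuousAt.continuousWithinAt)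
    (fun x hx => (hf x (Ioo_subset_Icc_self hx)).differentiableAt.differentiableWithinAt)
    (ae_of_all _ fun x hx => (hf x (Ioo_subset_Icc_self hx)).deriv ▸
      hf'g x (Ioo_subset_Icc_self hx))
    hg

variable {A B B' : ℝ → G} {b : G} {s t : ℝ}

lemma norm_add_smul_sub_le_integral {g : ℝ → ℝ} (hg : Continuous g) (hst : s ≤ t)
    (hA : ∀ u ∈ Icc s t, HasDerivAt A (B u) u) (hB : ∀ u ∈ Icc s t, HasDerivAt B (B' u) u)
    (hB'g : ∀ u ∈ Icc s t, ‖B' u‖ ≤ g u) (hAt : A t = 0) (hBt : B t = b) :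
    ‖A s + (t - s) • b‖ ≤ ∫ u in s..t, (u - s) * g u := by
  have hBb : ∀ u ∈ Icc s t, ‖B u - b‖ ≤ ∫ r in u..t, g r := fun u hu => by
    rw [← norm_neg, neg_sub, ← hBt]
    exact norm_sub_le_integral_of_hasDerivAt hu.2
      (fun r hr => hB r ⟨hu.1.trans hr.1, hr.2⟩) (hg.intervalIntegrable u t)
      fun r hr => hB'g r ⟨hu.1.trans hr.1, hr.2⟩
  have hderiv : ∀ u ∈ Icc s t, HasDerivAt (fun r => A r + (t - r) • b) (B u - b) u := fun u hu =>
    ((hA u hu).add (((hasDerivAt_id u).const_sub t).smul_const b)).congr_deriv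
      (by simp [sub_eq_add_neg])
  have h := norm_sub_le_integral_of_hasDerivAt hst hderiv
    ((continuous_iff_continuousAt.2 fun u =>
      (hg.hasDerivAt_integral_left t u).continuousAt).intervalIntegrable s t) hBb
  rwa [hAt, sub_self, zero_smul, add_zero, zero_sub, norm_neg,
    integral_integral_eq_integral_sub_mul hg] at h

lemma norm_add_smul_add_norm_sub_le {k : ℝ → ℝ} {m : ℝ} (hk : Continuous k)
    (hk0 : ∀ u ∈ Icc 0 t, 0 ≤ k u) (hm : ∀ s ∈ Icc 0 t, ∫ u in s..t, (1 + u) * k u ≤ m)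
    (hA : ∀ u ∈ Icc 0 t, HasDerivAt A (B u) u) (hB : ∀ u ∈ Icc 0 t, HasDerivAt B (B' u) u)
    (hB'k : ∀ u ∈ Icc 0 t, ‖B' u‖ ≤ k u * ‖A u‖) (hAt : A t = 0) (hBt : B t = b) :
    ∀ s ∈ Icc 0 t, ‖A s + (t - s) • b‖ + ‖B s - b‖ ≤ 2 * m * exp m * ‖b‖ * (t - s) := by
  intro s hs
  have sub_Icc : ∀ {s'}, s' ∈ Icc 0 t → Icc s' t ⊆ Icc 0 t := fun hs' => Icc_subset_Icc_left hs'.1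
  obtain ⟨Â, hÂ, hÂA⟩ := ContinuousOn.exists_continuous_eqOn_Icc (hs.1.trans hs.2)
    fun u hu => (hA u hu).continuousAt.continuousWithinAt
  set W := fun u => ‖Â u‖
  set c := fun u => (1 + u) * k u
  have hW : Continuous W := hÂ.norm
  have hc : Continuous c := by fun_prop
  have hc0 : ∀ u ∈ Icc 0 t, 0 ≤ c u := fun u hu => mul_nonneg (by linarith [hu.1]) (hk0 u hu)
  have hkW : ∀ u ∈ Icc 0 t, 0 ≤ k u * W u := fun u hu => mul_nonneg (hk0 u hu) (norm_nonneg _)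
  have hB'W : ∀ s' ∈ Icc 0 t, ∀ u ∈ Icc s' t, ‖B' u‖ ≤ (k * W) u := fun s' hs' u hu => by
    simpa only [Pi.mul_apply, W, hÂA (sub_Icc hs' hu)] using hB'k u (sub_Icc hs' hu)
  have hA_le : ∀ s' ∈ Icc 0 t, ‖A s' + (t - s') • b‖ ≤ ∫ u in s'..t, c u * W u := fun s' hs' =>
    (norm_add_smul_sub_le_integral (hk.mul hW) hs'.2 (fun u hu => hA u (sub_Icc hs' hu))
      (fun u hu => hB u (sub_Icc hs' hu)) (hB'W s' hs') hAt hBt).trans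
      (integral_mono_on hs'.2 (Continuous.intervalIntegrable (by fun_prop) _ _)
        ((hc.mul hW).intervalIntegrable _ _) fun u hu =>
          (mul_le_mul_of_nonneg_right (by linarith [hs'.1] : u - s' ≤ 1 + u)
            (hkW u (sub_Icc hs' hu))).trans_eq (by ring))
  have hB_le : ‖B s - b‖ ≤ ∫ u in s..t, c u * W u := by
    rw [norm_sub_rev, ← hBt]
    exact (norm_sub_le_integral_of_hasDerivAt hs.2 (fun u hu => hB u (sub_Icc hs hu))
      ((hk.mul hW).intervalIntegrable s t) (hB'W s hs)).trans
      (integral_mono_on hs.2 ((hk.mul hW).intervalIntegrable s t)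
        ((hc.mul hW).intervalIntegrable s t) fun u hu =>
          (le_mul_of_one_le_left (hkW u (sub_Icc hs hu)) (by linarith [hs.1, hu.1] :
            1 ≤ 1 + u)).trans_eq (by ring))
  have hW_rec : ∀ u ∈ Icc 0 t, W u ≤ ‖b‖ * (t - u) + ∫ r in u..t, c r * W r := fun u hu =>
    calc W u = ‖(A u + (t - u) • b) - (t - u) • b‖ := by rw [add_sub_cancel_right, ← hÂA hu]
      _ ≤ ‖A u + (t - u) • b‖ + ‖(t - u) • b‖ := norm_sub_le _ _
      _ ≤ ‖b‖ * (t - u) + ∫ r in u..t, c r * W r := by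
        rw [norm_smul, Real.norm_of_nonneg (sub_nonneg.2 hu.2)]
        linarith [hA_le u hu]
  have hcW := integral_mul_le_of_le_mul_sub_add_integral hW hc hc0 hm (norm_nonneg b) hW_rec s hs
  linarith [hA_le s hs]

end SecondOrder

lemma integral_one_add_rpow_neg_three_halves_le {s t : ℝ} (hs : 0 ≤ s) (hst : s ≤ t) :
    ∫ u in s..t, (1 + u) ^ (-(3 / 2) : ℝ) ≤ 2 := by
  have h0 : (0 : ℝ) ∉ uIcc (1 + s) (1 + t) := fun h => by
    rw [uIcc_of_le (by linarith)] at h; linarith [h.1]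
  rw [integral_comp_add_left (fun x => x ^ (-(3 / 2) : ℝ)),
    integral_rpow (Or.inr ⟨by norm_num, h0⟩)]
  have h1 : (1 + s) ^ (-(3 / 2) + 1 : ℝ) ≤ 1 :=
    rpow_le_one_of_one_le_of_nonpos (by linarith) (by norm_num)
  have h2 : 0 ≤ (1 + t) ^ (-(3 / 2) + 1 : ℝ) := rpow_nonneg (by linarith) _
  rw [div_le_iff_of_neg (by norm_num)]
  linarith

lemma integral_one_add_mul_div_rpow_le {δ s t : ℝ} (hδ : 0 ≤ δ) (hs : 0 ≤ s) (hst : s ≤ t) :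
    ∫ u in s..t, (1 + u) * (δ / (1 + |u|) ^ ((5 : ℝ) / 2)) ≤ 2 * δ := by
  have h : ∀ u ∈ uIcc s t, (1 + u) * (δ / (1 + |u|) ^ ((5 : ℝ) / 2))
      = δ * (1 + u) ^ (-(3 / 2) : ℝ) := fun u hu => by
    rw [uIcc_of_le hst] at hu
    have hu0 : 0 ≤ u := hs.trans hu.1
    have hpos : 0 < 1 + u := by linarith
    rw [abs_of_nonneg hu0, show (5 / 2 : ℝ) = 1 + 3 / 2 by norm_num, rpow_add hpos, rpow_one,
      rpow_neg hpos.le]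
    field_simp
  rw [integral_congr h, intervalIntegral.integral_const_mul, mul_comm]
  exact mul_le_mul_of_nonneg_right (integral_one_add_rpow_neg_three_halves_le hs hst) hδ

/-- Velocity-Jacobian estimate for backward characteristics (Bardos–Degond):
if `‖∇ₓ²φ(τ)‖_∞ ≤ δ(1+τ)^{-5/2}` (here `E = ∇ₓφ` with `‖fderiv (E τ)‖ ≤ δ(1+τ)^{-5/2}`)
and `(X,V)` are backward characteristics with terminal data `X(t)=x`, `V(t)=v`, then the
velocity Jacobians `DXv = ∂X/∂v`, `DVv = ∂V/∂v` (solving the variational ODE with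
terminal data `0` and `Id`) satisfy
`‖DXv(s) + (t-s)·Id‖ + ‖DVv(s) - Id‖ ≤ Cδ(t-s)` for all `0 ≤ s ≤ t`. -/
theorem stmt5 :
    ∃ C > 0, ∀ (δ : ℝ), 0 < δ → δ ≤ 1 →
      ∀ (σ : ℝ), σ = 1 ∨ σ = -1 →
      ∀ (E : ℝ → EuclideanSpace ℝ (Fin 3) → EuclideanSpace ℝ (Fin 3)),
        (∀ τ, Differentiable ℝ (E τ)) →
        (∀ τ, 0 ≤ τ → ∀ y, ‖fderiv ℝ (E τ) y‖ ≤ δ / (1 + τ) ^ ((5 : ℝ) / 2)) →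
        ∀ (t : ℝ) (x v : EuclideanSpace ℝ (Fin 3))
          (X V : ℝ → EuclideanSpace ℝ (Fin 3))
          (DXv DVv : ℝ → EuclideanSpace ℝ (Fin 3) →L[ℝ] EuclideanSpace ℝ (Fin 3)),
          0 ≤ t →
          (∀ s ∈ Set.Icc (0 : ℝ) t, HasDerivAt X (V s) s) →
          (∀ s ∈ Set.Icc (0 : ℝ) t, HasDerivAt V (σ • E s (X s)) s) →
          X t = x → V t = v →
          (∀ s ∈ Set.Icc (0 : ℝ) t, HasDerivAt DXv (DVv s) s) →
          (∀ s ∈ Set.Icc (0 : ℝ) t,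
            HasDerivAt DVv (σ • ((fderiv ℝ (E s) (X s)).comp (DXv s))) s) →
          DXv t = 0 →
          DVv t = ContinuousLinearMap.id ℝ (EuclideanSpace ℝ (Fin 3)) →
          ∀ s ∈ Set.Icc (0 : ℝ) t,
            ‖DXv s + (t - s) • ContinuousLinearMap.id ℝ (EuclideanSpace ℝ (Fin 3))‖ +
              ‖DVv s - ContinuousLinearMap.id ℝ (EuclideanSpace ℝ (Fin 3))‖
              ≤ C * δ * (t - s) := by
  refine ⟨4 * exp 2, by positivity, ?_⟩
  intro δ hδ hδ1 σ hσ E _ hE t _ _ X _ DXv DVv _ _ _ _ _ hDXv hDVv hDXvt hDVvt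
  -- `|u|` makes `k` continuous on `ℝ`; for `u ≥ 0` it is the bound in `hE`
  set k := fun u : ℝ => δ / (1 + |u|) ^ ((5 : ℝ) / 2)
  have hk : Continuous k := continuous_const.div
    ((continuous_const.add continuous_abs).rpow_const fun _ => Or.inr (by norm_num))
    fun u => (rpow_pos_of_pos (by positivity) _).ne'
  have hF : ∀ u ∈ Icc 0 t, ‖σ • (fderiv ℝ (E u) (X u)).comp (DXv u)‖ ≤ k u * ‖DXv u‖ :=
    fun u hu => by
      have hσ1 : ‖σ‖ = 1 := by rcases hσ with rfl | rfl <;> norm_num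
      rw [norm_smul, hσ1, one_mul]
      refine (ContinuousLinearMap.opNorm_comp_le _ _).trans
        (mul_le_mul_of_nonneg_right ?_ (norm_nonneg _))
      simpa [k, abs_of_nonneg hu.1] using hE u hu.1 (X u)
  intro s hs
  refine (norm_add_smul_add_norm_sub_le hk (fun u _ => by positivity)
    (fun s' hs' => integral_one_add_mul_div_rpow_le hδ.le hs'.1 hs'.2)
    hDXv hDVv hF hDXvt hDVvt s hs).trans ?_
  have hts : 0 ≤ t - s := sub_nonneg.2 hs.2
  calc 2 * (2 * δ) * exp (2 * δ) * ‖ContinuousLinearMap.id ℝ (EuclideanSpace ℝ (Fin 3))‖ * (t - s)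
      ≤ 2 * (2 * δ) * exp 2 * 1 * (t - s) := by
        gcongr
        · linarith
        · exact ContinuousLinearMap.norm_id_le
    _ = 4 * exp 2 * δ * (t - s) := by ring
end

section
/- Under the assumptions of the previous statement (‖∇ₓ²φ(τ)‖_∞ ≤ δ(1+τ)^{-5/2}), for all 0 ≤ s ≤ t one also has |∂X(s)/∂x − Id| + |∂V(s)/∂x| ≤ Cδ with C independent of t, s, x, v. -/
/-!
Write `A = ∂X/∂x - Id` and `B = ∂V/∂x`, so that `A' = B`, `‖B'‖ ≤ k (1 + ‖A‖)` with
`k(s) = δ (1 + s)^(-5/2)`, and `A(t) = B(t) = 0`. For `r(s) = ∫ₛᵗ ‖B‖` one has `‖A(s)‖ ≤ r(s)`;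
as `r` decreases, fencing `B` backward from `t` gives
`‖B(s)‖ ≤ (1 + r(s)) ∫ₛᵗ k ≤ (1 + r(s)) (2δ/3) (1 + s)^(-3/2)`.
This is the differential inequality `-r' ≤ κ (1 + r)` with `∫₀^∞ κ = 4δ/3`, so Grönwall gives
`1 + r ≤ exp (4δ/3)` uniformly in `t`, and both Jacobian errors are `O(δ)`.
-/

open Set Real intervalIntegral

theorem norm_le_of_norm_deriv_le_neg_deriv_boundary {E : Type*} [NormedAddCommGroup E]
    [NormedSpace ℝ E] {f f' : ℝ → E} {B B' : ℝ → ℝ} {a b : ℝ}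
    (hf : ∀ x ∈ Icc a b, HasDerivAt f (f' x) x) (hB : ∀ x ∈ Icc a b, HasDerivAt B (B' x) x)
    (hb : ‖f b‖ ≤ B b) (bound : ∀ x ∈ Icc a b, ‖f' x‖ ≤ -B' x) :
    ∀ x ∈ Icc a b, ‖f x‖ ≤ B x := by
  have hmem : ∀ x ∈ Icc a b, a + b - x ∈ Icc a b := fun x hx =>
    ⟨by linarith [hx.2], by linarith [hx.1]⟩
  have hf_rev : ∀ x ∈ Icc a b, HasDerivAt (fun x => f (a + b - x)) (-f' (a + b - x)) x :=
    fun x hx => (hf _ (hmem x hx)).comp_const_sub _ x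
  have hB_rev : ∀ x ∈ Icc a b, HasDerivAt (fun x => B (a + b - x)) (-B' (a + b - x)) x :=
    fun x hx => (hB _ (hmem x hx)).comp_const_sub _ x
  have key := image_norm_le_of_norm_deriv_right_le_deriv_boundary'
    (fun x hx => (hf_rev x hx).continuousAt.continuousWithinAt)
    (fun x hx => (hf_rev x (Ico_subset_Icc_self hx)).hasDerivWithinAt)
    (by simpa using hb)
    (fun x hx => (hB_rev x hx).continuousAt.continuousWithinAt)
    (fun x hx => (hB_rev x (Ico_subset_Icc_self hx)).hasDerivWithinAt)
    (fun x hx => by simpa using bound _ (hmem x (Ico_subset_Icc_self hx)))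
  intro x hx
  simpa using key (hmem x hx)

theorem le_mul_exp_sub_of_neg_deriv_le_mul {f f' K κ : ℝ → ℝ} {a b x : ℝ}
    (hf : ContinuousOn f (Icc a b)) (hK : ContinuousOn K (Icc a b))
    (hf' : ∀ x ∈ Ioo a b, HasDerivAt f (f' x) x) (hK' : ∀ x ∈ Ioo a b, HasDerivAt K (κ x) x)
    (h : ∀ x ∈ Ioo a b, -f' x ≤ κ x * f x) (hx : x ∈ Icc a b) :
    f x ≤ f b * exp (K b - K x) := by
  have hmono : MonotoneOn (fun x => f x * exp (K x)) (Icc a b) := by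
    refine monotoneOn_of_hasDerivWithinAt_nonneg (convex_Icc a b)
      (hf.mul (continuous_exp.comp_continuousOn hK))
      (f' := fun x => (f' x + κ x * f x) * exp (K x)) ?_ ?_ <;> rw [interior_Icc] <;>
      intro y hy
    · exact ((hf' y hy).mul (hK' y hy).exp).hasDerivWithinAt.congr_deriv (by ring)
    · exact mul_nonneg (by linarith [h y hy]) (exp_pos _).le
  have := hmono hx (right_mem_Icc.2 (hx.1.trans hx.2)) hx.2
  rwa [exp_sub, ← mul_div_assoc, le_div_iff₀ (exp_pos _)]

theorem exp_sub_one_le_mul_exp (x : ℝ) : exp x - 1 ≤ x * exp x := by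
  have h := mul_le_mul_of_nonneg_right (one_sub_le_exp_neg x) (exp_pos x).le
  rw [← exp_add, neg_add_cancel, exp_zero] at h
  linarith

theorem hasDerivAt_one_add_rpow (p : ℝ) {s : ℝ} (hs : -1 < s) :
    HasDerivAt (fun s => (1 + s) ^ p) (p * (1 + s) ^ (p - 1)) s := by
  simpa using ((hasDerivAt_id s).const_add 1).rpow_const (p := p)
    (Or.inl (by simp only [id]; linarith))

theorem norm_sub_le_integral_norm_of_hasDerivAt {E : Type*} [NormedAddCommGroup E]
    [NormedSpace ℝ E] [CompleteSpace E] {f f' : ℝ → E} {a b : ℝ} (hab : a ≤ b)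
    (hf : ∀ x ∈ Icc a b, HasDerivAt f (f' x) x) (hf' : ContinuousOn f' (Icc a b)) :
    ‖f a - f b‖ ≤ ∫ x in a..b, ‖f' x‖ := by
  rw [norm_sub_rev, ← integral_eq_sub_of_hasDerivAt (by rwa [uIcc_of_le hab])
    (hf'.intervalIntegrable_of_Icc hab)]
  exact norm_integral_le_integral_norm hab

theorem norm_le_of_norm_deriv_le_decay {E : Type*} [NormedAddCommGroup E] [NormedSpace ℝ E]
    {Z Z' : ℝ → E} {m δ s t : ℝ} (hs : 0 ≤ s) (hst : s ≤ t)
    (hZ : ∀ τ ∈ Icc s t, HasDerivAt Z (Z' τ) τ) (hZt : Z t = 0)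
    (hZ' : ∀ τ ∈ Icc s t, ‖Z' τ‖ ≤ m * (δ * (1 + τ) ^ (-(5 / 2) : ℝ))) :
    ‖Z s‖ ≤ m * (2 * δ / 3 * ((1 + s) ^ (-(3 / 2) : ℝ) - (1 + t) ^ (-(3 / 2) : ℝ))) := by
  have hB : ∀ τ ∈ Icc s t, HasDerivAt
      (fun τ => m * (2 * δ / 3 * ((1 + τ) ^ (-(3 / 2) : ℝ) - (1 + t) ^ (-(3 / 2) : ℝ))))
      (-(m * (δ * (1 + τ) ^ (-(5 / 2) : ℝ)))) τ := fun τ hτ =>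
    (((hasDerivAt_one_add_rpow _ (by linarith [hτ.1])).sub_const _).const_mul _ |>.const_mul _
      |>.congr_deriv (by rw [show (-(3 / 2) - 1 : ℝ) = -(5 / 2) by norm_num]; ring))
  exact norm_le_of_norm_deriv_le_neg_deriv_boundary hZ hB (by simp [hZt])
    (fun τ hτ => by simpa using hZ' τ hτ) s (left_mem_Icc.2 hst)

theorem one_add_integral_norm_le_exp {E : Type*} [NormedAddCommGroup E] {Z : ℝ → E}
    {δ t : ℝ} (hδ : 0 ≤ δ) (hZ : ContinuousOn Z (Icc 0 t))
    (hZr : ∀ s ∈ Icc 0 t,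
      ‖Z s‖ ≤ (1 + ∫ τ in s..t, ‖Z τ‖) * (2 * δ / 3 * (1 + s) ^ (-(3 / 2) : ℝ)))
    {s : ℝ} (hs : s ∈ Icc 0 t) :
    1 + ∫ τ in s..t, ‖Z τ‖ ≤ exp (4 * δ / 3) := by
  have hK : ∀ x ∈ Icc 0 t, HasDerivAt (fun x => -(4 * δ / 3) * (1 + x) ^ (-(1 / 2) : ℝ))
      (2 * δ / 3 * (1 + x) ^ (-(3 / 2) : ℝ)) x := fun x hx =>
    ((hasDerivAt_one_add_rpow _ (by linarith [hx.1])).const_mul _).congr_deriv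
      (by rw [show (-(1 / 2) - 1 : ℝ) = -(3 / 2) by norm_num]; ring)
  have hr : ∀ x ∈ Ioo 0 t, HasDerivAt (fun x => 1 + ∫ τ in x..t, ‖Z τ‖) (-‖Z x‖) x :=
    fun x hx => by
      have hZo : ContinuousOn (fun τ => ‖Z τ‖) (Ioo 0 t) := hZ.norm.mono Ioo_subset_Icc_self
      exact (integral_hasDerivAt_left
        ((hZ.norm.mono (Icc_subset_Icc_left hx.1.le)).intervalIntegrable_of_Icc hx.2.le)
        (hZo.stronglyMeasurableAtFilter isOpen_Ioo x hx)
        (hZo.continuousAt (isOpen_Ioo.mem_nhds hx))).const_add 1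
  have key := le_mul_exp_sub_of_neg_deriv_le_mul (f := fun x => 1 + ∫ τ in x..t, ‖Z τ‖)
    (K := fun x => -(4 * δ / 3) * (1 + x) ^ (-(1 / 2) : ℝ))
    (continuousOn_const.add (by
      simpa [uIcc_of_le (hs.1.trans hs.2)] using
        continuousOn_primitive_interval_left (a := 0) (b := t) (μ := MeasureTheory.volume)
          (by simpa [uIcc_of_le (hs.1.trans hs.2)] using hZ.norm.integrableOn_Icc)))
    (fun x hx => (hK x hx).continuousAt.continuousWithinAt) hr
    (fun x hx => hK x (Ioo_subset_Icc_self hx))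
    (fun x hx => by rw [neg_neg, mul_comm]; exact hZr x (Ioo_subset_Icc_self hx)) hs
  simp only [integral_same, add_zero, one_mul] at key
  refine key.trans (exp_le_exp.2 ?_)
  have ht : 0 ≤ (1 + t) ^ (-(1 / 2) : ℝ) := rpow_nonneg (by linarith [hs.1, hs.2]) _
  have hs1 : (1 + s) ^ (-(1 / 2) : ℝ) ≤ 1 :=
    rpow_le_one_of_one_le_of_nonpos (by linarith [hs.1]) (by norm_num)
  nlinarith

theorem norm_sub_add_norm_le_of_norm_second_deriv_le {E : Type*} [NormedAddCommGroup E]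
    [NormedSpace ℝ E] [CompleteSpace E] {Y Z Z' : ℝ → E} {δ t s : ℝ} (hδ : 0 ≤ δ)
    (hY : ∀ τ ∈ Icc 0 t, HasDerivAt Y (Z τ) τ) (hZ : ∀ τ ∈ Icc 0 t, HasDerivAt Z (Z' τ) τ)
    (hZt : Z t = 0)
    (hZ' : ∀ τ ∈ Icc 0 t, ‖Z' τ‖ ≤ (1 + ‖Y τ - Y t‖) * (δ * (1 + τ) ^ (-(5 / 2) : ℝ)))
    (hs : s ∈ Icc 0 t) :
    ‖Y s - Y t‖ + ‖Z s‖ ≤ 2 * δ * exp (4 * δ / 3) := by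
  set r : ℝ → ℝ := fun s => ∫ τ in s..t, ‖Z τ‖
  have hZc : ContinuousOn Z (Icc 0 t) := fun τ hτ => (hZ τ hτ).continuousAt.continuousWithinAt
  have hYr : ∀ x ∈ Icc 0 t, ‖Y x - Y t‖ ≤ r x := fun x hx =>
    norm_sub_le_integral_norm_of_hasDerivAt hx.2 (fun τ hτ => hY τ ⟨hx.1.trans hτ.1, hτ.2⟩)
      (hZc.mono (Icc_subset_Icc_left hx.1))
  have hr_anti : AntitoneOn r (Icc 0 t) := fun x hx y hy hxy =>
    integral_mono_interval hxy hy.2 le_rfl (MeasureTheory.ae_of_all _ fun _ => norm_nonneg _)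
      ((hZc.norm.mono (Icc_subset_Icc_left hx.1)).intervalIntegrable_of_Icc hx.2)
  have hr_nonneg : ∀ x ∈ Icc 0 t, 0 ≤ r x := fun x hx =>
    integral_nonneg hx.2 fun _ _ => norm_nonneg _
  have hZr : ∀ x ∈ Icc 0 t,
      ‖Z x‖ ≤ (1 + r x) * (2 * δ / 3 * ((1 + x) ^ (-(3 / 2) : ℝ) - (1 + t) ^ (-(3 / 2) : ℝ))) :=
    fun x hx => norm_le_of_norm_deriv_le_decay hx.1 hx.2
      (fun τ hτ => hZ τ ⟨hx.1.trans hτ.1, hτ.2⟩) hZt fun τ hτ => by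
        have hτ' : τ ∈ Icc 0 t := ⟨hx.1.trans hτ.1, hτ.2⟩
        refine (hZ' τ hτ').trans (mul_le_mul_of_nonneg_right ?_ ?_)
        · linarith [hYr τ hτ', hr_anti hx hτ' hτ.1]
        · exact mul_nonneg hδ (rpow_nonneg (by linarith [hτ'.1]) _)
  have hexp : 1 + r s ≤ exp (4 * δ / 3) := by
    refine one_add_integral_norm_le_exp hδ hZc (fun x hx => (hZr x hx).trans ?_) hs
    refine mul_le_mul_of_nonneg_left ?_ (by linarith [hr_nonneg x hx])
    have := rpow_nonneg (show (0 : ℝ) ≤ 1 + t by linarith [hx.1, hx.2]) (-(3 / 2))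
    nlinarith
  have hΦ : 2 * δ / 3 * ((1 + s) ^ (-(3 / 2) : ℝ) - (1 + t) ^ (-(3 / 2) : ℝ)) ≤ 2 * δ / 3 := by
    have := rpow_nonneg (show (0 : ℝ) ≤ 1 + t by linarith [hs.1, hs.2]) (-(3 / 2))
    have := rpow_le_one_of_one_le_of_nonpos (show 1 ≤ 1 + s by linarith [hs.1])
      (show (-(3 / 2) : ℝ) ≤ 0 by norm_num)
    nlinarith
  have hr_le : r s ≤ 4 * δ / 3 * exp (4 * δ / 3) := by
    linarith [exp_sub_one_le_mul_exp (4 * δ / 3)]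
  calc ‖Y s - Y t‖ + ‖Z s‖ ≤ r s + (1 + r s) * (2 * δ / 3) := by
        gcongr
        · exact hYr s hs
        · exact (hZr s hs).trans (mul_le_mul_of_nonneg_left hΦ (by linarith [hr_nonneg s hs]))
    _ ≤ 4 * δ / 3 * exp (4 * δ / 3) + exp (4 * δ / 3) * (2 * δ / 3) := by
        gcongr
    _ = 2 * δ * exp (4 * δ / 3) := by ring

/-- Space-Jacobian estimate for backward characteristics: under
`‖fderiv (E τ)‖ ≤ δ(1+τ)^{-5/2}`, the Jacobians `DXx = ∂X/∂x`, `DVx = ∂V/∂x`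
(solving the variational ODE with terminal data `Id` and `0`) satisfy
`‖DXx(s) - Id‖ + ‖DVx(s)‖ ≤ Cδ` for all `0 ≤ s ≤ t`. -/
theorem stmt6 :
    ∃ C > 0, ∀ (δ : ℝ), 0 < δ → δ ≤ 1 →
      ∀ (σ : ℝ), σ = 1 ∨ σ = -1 →
      ∀ (E : ℝ → EuclideanSpace ℝ (Fin 3) → EuclideanSpace ℝ (Fin 3)),
        (∀ τ, Differentiable ℝ (E τ)) →
        (∀ τ, 0 ≤ τ → ∀ y, ‖fderiv ℝ (E τ) y‖ ≤ δ / (1 + τ) ^ ((5 : ℝ) / 2)) →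
        ∀ (t : ℝ) (x v : EuclideanSpace ℝ (Fin 3))
          (X V : ℝ → EuclideanSpace ℝ (Fin 3))
          (DXx DVx : ℝ → EuclideanSpace ℝ (Fin 3) →L[ℝ] EuclideanSpace ℝ (Fin 3)),
          0 ≤ t →
          (∀ s ∈ Set.Icc (0 : ℝ) t, HasDerivAt X (V s) s) →
          (∀ s ∈ Set.Icc (0 : ℝ) t, HasDerivAt V (σ • E s (X s)) s) →
          X t = x → V t = v →
          (∀ s ∈ Set.Icc (0 : ℝ) t, HasDerivAt DXx (DVx s) s) →
          (∀ s ∈ Set.Icc (0 : ℝ) t,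
            HasDerivAt DVx (σ • ((fderiv ℝ (E s) (X s)).comp (DXx s))) s) →
          DXx t = ContinuousLinearMap.id ℝ (EuclideanSpace ℝ (Fin 3)) →
          DVx t = 0 →
          ∀ s ∈ Set.Icc (0 : ℝ) t,
            ‖DXx s - ContinuousLinearMap.id ℝ (EuclideanSpace ℝ (Fin 3))‖ + ‖DVx s‖
              ≤ C * δ := by
  refine ⟨2 * exp (4 / 3), by positivity, ?_⟩
  intro δ hδ hδ1 σ hσ E _ hE t _ _ X _ DXx DVx _ _ _ _ _ hDXx hDVx hDXxt hDVxt s hs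
  have hσ1 : ‖σ‖ = 1 := by rcases hσ with rfl | rfl <;> simp
  have hforce : ∀ τ ∈ Icc 0 t, ‖σ • (fderiv ℝ (E τ) (X τ)).comp (DXx τ)‖ ≤
      (1 + ‖DXx τ - DXx t‖) * (δ * (1 + τ) ^ (-(5 / 2) : ℝ)) := fun τ hτ => by
    rw [norm_smul, hσ1, one_mul, mul_comm, rpow_neg (by linarith [hτ.1]), ← div_eq_mul_inv]
    refine (ContinuousLinearMap.opNorm_comp_le _ _).trans (mul_le_mul (hE τ hτ.1 _) ?_
      (norm_nonneg _) (div_nonneg hδ.le (rpow_nonneg (by linarith [hτ.1]) _)))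
    calc ‖DXx τ‖ ≤ ‖DXx τ - DXx t‖ + ‖DXx t‖ := norm_le_norm_sub_add _ _
      _ ≤ 1 + ‖DXx τ - DXx t‖ := by
        rw [add_comm, hDXxt]; gcongr; exact ContinuousLinearMap.norm_id_le
  calc _ ≤ 2 * δ * exp (4 * δ / 3) := by
        simpa only [hDXxt] using
          norm_sub_add_norm_le_of_norm_second_deriv_le hδ.le hDXx hDVx hDVxt hforce hs
    _ ≤ 2 * exp (4 / 3) * δ := by
        rw [mul_right_comm]; gcongr; linarith
end

section
/- Let f, g : ℝ³ → ℝ and define the loss collision operator Γ_loss(f,g)(v) := f(v) · ∫_{ℝ³}∫_{S²} B(v−u,θ) √(μ(u)) g(u) dω du with B(v−u,θ) = |v−u|^γ b(θ), 0 ≤ γ ≤ 1, b bounded. Then for β ≥ 0 and the weight w_β(t,v) = (1+|v|²)^{β/2} e^{σ₀|v|²/(1+t)} (0 < σ₀ ≤ 1/16), there holds |w_β(t,v) Γ_loss(f,g)(v)| ≤ C ν(v) |w_β(t,v) f(v)| · ‖w_β(t,·) g‖_∞^{1/2} · (∫_{ℝ³} |g(u)| du)^{1/2}, for all v ∈ ℝ³,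 where ν(v) ≅ (1+|v|)^γ. -/
/-!
The weight `w_β` is at least `1`, so `‖w_β g‖_∞ ≤ M` gives `|g| ≤ M` and `w_β` simply factors
out on the left together with `f(v)`. The kernel is bounded by
`‖b‖_∞ |S²| |v - u|^γ ≤ ‖b‖_∞ |S²| (1 + |v|)^γ (1 + |u|)`, and the extra `(1 + |u|)` is absorbed by
`√μ(u) ≤ e^{-|u|²/4}`, leaving a Gaussian `e^{-|u|²/8}`. Writing `|g| = √|g| √|g| ≤ √M √|g|` and
applying Cauchy–Schwarz to `e^{-|u|²/8} · √|g(u)|` yields `√M (∫ |g|)^{1/2}`.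
-/

open MeasureTheory

theorem integrable_exp_neg_mul_sq_norm {V : Type*} [NormedAddCommGroup V] [InnerProductSpace ℝ V]
    [FiniteDimensional ℝ V] [MeasurableSpace V] [BorelSpace V] {c : ℝ} (hc : 0 < c) :
    Integrable fun u : V => Real.exp (-(c * ‖u‖ ^ 2)) := by
  refine ((GaussianFourier.integrable_cexp_neg_mul_sq_norm_add
    (b := (c : ℂ)) (by simpa using hc) 0 0).norm).congr (ae_of_all _ fun u => ?_)
  simp [Complex.norm_exp, ← Complex.ofReal_pow]

theorem memLp_two_exp_neg_mul_sq_norm {V : Type*} [NormedAddCommGroup V] [InnerProductSpace ℝ V]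
    [FiniteDimensional ℝ V] [MeasurableSpace V] [BorelSpace V] {c : ℝ} (hc : 0 < c) :
    MemLp (fun u : V => Real.exp (-(c * ‖u‖ ^ 2))) 2 := by
  refine (memLp_two_iff_integrable_sq (by fun_prop)).2 ?_
  refine (integrable_exp_neg_mul_sq_norm (V := V) (by positivity : 0 < 2 * c)).congr
    (ae_of_all _ fun u => ?_)
  dsimp only
  rw [← Real.exp_nat_mul]
  ring_nf

theorem integral_mul_le_sqrt_mul_sqrt {α : Type*} [MeasurableSpace α] {μ : Measure α}
    {f g : α → ℝ} (hf : MemLp f 2 μ) (hg : MemLp g 2 μ) (hf0 : ∀ x, 0 ≤ f x) (hg0 : ∀ x, 0 ≤ g x) :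
    ∫ x, f x * g x ∂μ ≤ √(∫ x, f x ^ 2 ∂μ) * √(∫ x, g x ^ 2 ∂μ) := by
  have h2 : ENNReal.ofReal 2 = 2 := by norm_num
  convert integral_mul_le_Lp_mul_Lq_of_nonneg Real.HolderConjugate.two_two
    (ae_of_all μ hf0) (ae_of_all μ hg0) (h2 ▸ hf) (h2 ▸ hg) using 1
  simp only [Real.sqrt_eq_rpow, Real.rpow_two, one_div]

theorem abs_integral_le_sqrt_mul_sqrt_integral_abs {α : Type*} [MeasurableSpace α]
    {μ : Measure α} {F h g : α → ℝ} {c M : ℝ} (hc : 0 ≤ c) (hh : MemLp h 2 μ) (hh0 : ∀ x, 0 ≤ h x)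
    (hg : Integrable g μ) (hgM : ∀ x, |g x| ≤ M) (hF : ∀ x, |F x| ≤ c * (h x * |g x|)) :
    |∫ x, F x ∂μ| ≤ c * √M * √(∫ x, h x ^ 2 ∂μ) * √(∫ x, |g x| ∂μ) := by
  have hsg : MemLp (fun x => √|g x|) 2 μ := by
    refine (memLp_two_iff_integrable_sq
      (Real.continuous_sqrt.comp_aestronglyMeasurable hg.abs.1)).2 ?_
    exact hg.abs.congr (ae_of_all _ fun x => (Real.sq_sqrt (abs_nonneg _)).symm)
  have hF' : ∀ x, ‖F x‖ ≤ c * √M * (h x * √|g x|) := fun x => calc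
    ‖F x‖ ≤ c * (h x * (√|g x| * √|g x|)) := by
      rw [Real.norm_eq_abs, Real.mul_self_sqrt (abs_nonneg _)]; exact hF x
    _ ≤ c * (h x * (√M * √|g x|)) := by gcongr; exact hh0 x; exact hgM x
    _ = c * √M * (h x * √|g x|) := by ring
  calc |∫ x, F x ∂μ| ≤ ∫ x, c * √M * (h x * √|g x|) ∂μ :=
        norm_integral_le_of_norm_le ((hh.integrable_mul hsg).const_mul _) (ae_of_all _ hF')
    _ = c * √M * ∫ x, h x * √|g x| ∂μ := integral_const_mul _ _
    _ ≤ c * √M * (√(∫ x, h x ^ 2 ∂μ) * √(∫ x, |g x| ∂μ)) := by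
        gcongr
        refine (integral_mul_le_sqrt_mul_sqrt hh hsg hh0 fun x => Real.sqrt_nonneg _).trans_eq ?_
        simp only [Real.sq_sqrt (abs_nonneg _)]
    _ = c * √M * √(∫ x, h x ^ 2 ∂μ) * √(∫ x, |g x| ∂μ) := by ring

theorem rpow_norm_sub_le {E : Type*} [SeminormedAddCommGroup E] {γ : ℝ} (hγ0 : 0 ≤ γ)
    (hγ1 : γ ≤ 1) (v u : E) : ‖v - u‖ ^ γ ≤ (1 + ‖v‖) ^ γ * (1 + ‖u‖) := calc
  ‖v - u‖ ^ γ ≤ ((1 + ‖v‖) * (1 + ‖u‖)) ^ γ := by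
      gcongr
      nlinarith [norm_sub_le v u, norm_nonneg v, norm_nonneg u]
  _ = (1 + ‖v‖) ^ γ * (1 + ‖u‖) ^ γ := Real.mul_rpow (by positivity) (by positivity)
  _ ≤ (1 + ‖v‖) ^ γ * (1 + ‖u‖) := by
      gcongr
      exact Real.rpow_le_self_of_one_le (by linarith [norm_nonneg u]) hγ1

theorem sqrt_maxwellian_le (r : ℝ) :
    √((2 * Real.pi) ^ (-(3 : ℝ) / 2) * Real.exp (-r ^ 2 / 2)) ≤ Real.exp (-(r ^ 2 / 4)) := calc
  _ ≤ √(Real.exp (-r ^ 2 / 2)) := by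
      gcongr
      exact mul_le_of_le_one_left (Real.exp_pos _).le
        (Real.rpow_le_one_of_one_le_of_nonpos (by nlinarith [Real.pi_gt_three]) (by norm_num))
  _ = Real.exp (-(r ^ 2 / 4)) := by rw [← Real.exp_half]; ring_nf

theorem one_add_mul_exp_neg_sq_le (r : ℝ) :
    (1 + r) * Real.exp (-(r ^ 2 / 4)) ≤ 3 * Real.exp (-(1 / 8 * r ^ 2)) := by
  have h : 1 + r ≤ 3 * Real.exp (r ^ 2 / 8) := by
    nlinarith [Real.add_one_le_exp (r ^ 2 / 8), sq_nonneg (r - 4)]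
  calc (1 + r) * Real.exp (-(r ^ 2 / 4))
      ≤ 3 * Real.exp (r ^ 2 / 8) * Real.exp (-(r ^ 2 / 4)) := by gcongr
    _ = 3 * Real.exp (-(1 / 8 * r ^ 2)) := by rw [mul_assoc, ← Real.exp_add]; ring_nf

theorem abs_integral_rpow_norm_sub_mul_le {Ω E : Type*} [MeasurableSpace Ω] (ν : Measure Ω)
    [IsFiniteMeasure ν] [SeminormedAddCommGroup E] {γ c : ℝ} (hγ0 : 0 ≤ γ) (hγ1 : γ ≤ 1)
    (hc : 0 ≤ c) {F : Ω → ℝ} (hF : ∀ ω, |F ω| ≤ c) (v u : E) :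
    |∫ ω, ‖v - u‖ ^ γ * F ω ∂ν| ≤ c * ν.real Set.univ * (1 + ‖v‖) ^ γ * (1 + ‖u‖) := calc
  |∫ ω, ‖v - u‖ ^ γ * F ω ∂ν| ≤ ‖v - u‖ ^ γ * c * ν.real Set.univ := by
      rw [← Real.norm_eq_abs]
      refine norm_integral_le_of_norm_le_const (ae_of_all _ fun ω => ?_)
      rw [Real.norm_eq_abs, abs_mul, abs_of_nonneg (by positivity)]
      gcongr
      exact hF ω
  _ ≤ (1 + ‖v‖) ^ γ * (1 + ‖u‖) * c * ν.real Set.univ := by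
      gcongr
      exact rpow_norm_sub_le hγ0 hγ1 v u
  _ = c * ν.real Set.univ * (1 + ‖v‖) ^ γ * (1 + ‖u‖) := by ring

theorem abs_integral_rpow_norm_sub_mul_mul_sqrt_maxwellian_le {Ω E : Type*} [MeasurableSpace Ω]
    (ν : Measure Ω) [IsFiniteMeasure ν] [SeminormedAddCommGroup E] {γ c : ℝ} (hγ0 : 0 ≤ γ)
    (hγ1 : γ ≤ 1) (hc : 0 ≤ c) {F : Ω → ℝ} (hF : ∀ ω, |F ω| ≤ c) (v u : E) (a : ℝ) :
    |(∫ ω, ‖v - u‖ ^ γ * F ω ∂ν) *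
        (√((2 * Real.pi) ^ (-(3 : ℝ) / 2) * Real.exp (-‖u‖ ^ 2 / 2)) * a)|
      ≤ 3 * c * ν.real Set.univ * (1 + ‖v‖) ^ γ * (Real.exp (-(1 / 8 * ‖u‖ ^ 2)) * |a|) := by
  set S := ν.real Set.univ
  calc _ ≤ c * S * (1 + ‖v‖) ^ γ * (1 + ‖u‖) * (Real.exp (-(‖u‖ ^ 2 / 4)) * |a|) := by
        rw [abs_mul, abs_mul, abs_of_nonneg (Real.sqrt_nonneg _)]
        gcongr
        · exact abs_integral_rpow_norm_sub_mul_le ν hγ0 hγ1 hc hF v u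
        · exact sqrt_maxwellian_le ‖u‖
    _ = c * S * (1 + ‖v‖) ^ γ * ((1 + ‖u‖) * Real.exp (-(‖u‖ ^ 2 / 4))) * |a| := by ring
    _ ≤ c * S * (1 + ‖v‖) ^ γ * (3 * Real.exp (-(1 / 8 * ‖u‖ ^ 2))) * |a| := by
        gcongr c * S * (1 + ‖v‖) ^ γ * ?_ * |a|
        exact one_add_mul_exp_neg_sq_le ‖u‖
    _ = 3 * c * S * (1 + ‖v‖) ^ γ * (Real.exp (-(1 / 8 * ‖u‖ ^ 2)) * |a|) := by ring

theorem one_le_weight {β σ t : ℝ} (hβ : 0 ≤ β) (hσ : 0 ≤ σ) (ht : 0 ≤ t) (r : ℝ) :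
    1 ≤ (1 + r ^ 2) ^ (β / 2) * Real.exp (σ * r ^ 2 / (1 + t)) :=
  one_le_mul_of_one_le_of_one_le
    (Real.one_le_rpow (by nlinarith [sq_nonneg r]) (by positivity))
    (Real.one_le_exp (by positivity))

theorem stmt10_general (γ σ₀ β Cb : ℝ) (hγ0 : 0 ≤ γ) (hγ1 : γ ≤ 1)
    (hσ0 : 0 < σ₀) (hβ : 0 ≤ β)
    (b : ℝ → ℝ) (hbd : ∀ r, |b r| ≤ Cb) :
    ∃ C > 0, ∀ t : ℝ, 0 ≤ t →
      ∀ (f g : EuclideanSpace ℝ (Fin 3) → ℝ), Measurable g → Integrable g →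
      ∀ M : ℝ, 0 ≤ M →
      (∀ u, |((1 + ‖u‖ ^ 2) ^ (β / 2) * Real.exp (σ₀ * ‖u‖ ^ 2 / (1 + t))) * g u| ≤ M) →
      ∀ v,
        |((1 + ‖v‖ ^ 2) ^ (β / 2) * Real.exp (σ₀ * ‖v‖ ^ 2 / (1 + t))) *
            (f v * ∫ u : EuclideanSpace ℝ (Fin 3),
              (∫ ω, ‖v - u‖ ^ γ *
                  b ((inner ℝ (v - u) ((ω : EuclideanSpace ℝ (Fin 3))) : ℝ) / ‖v - u‖)
                ∂((volume : Measure (EuclideanSpace ℝ (Fin 3))).toSphere)) *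
              (Real.sqrt ((2 * Real.pi) ^ (-(3 : ℝ) / 2) * Real.exp (-‖u‖ ^ 2 / 2)) * g u))|
          ≤ C * (1 + ‖v‖) ^ γ *
              |((1 + ‖v‖ ^ 2) ^ (β / 2) * Real.exp (σ₀ * ‖v‖ ^ 2 / (1 + t))) * f v| *
              Real.sqrt M * Real.sqrt (∫ u, |g u|) := by
  set S := (volume : Measure (EuclideanSpace ℝ (Fin 3))).toSphere.real Set.univ
  set K := ∫ u : EuclideanSpace ℝ (Fin 3), Real.exp (-(1 / 8 * ‖u‖ ^ 2)) ^ 2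
  have hCb : 0 ≤ Cb := (abs_nonneg _).trans (hbd 0)
  refine ⟨3 * Cb * S * √K + 1, by positivity, fun t ht f g _ hg M _ hgM v => ?_⟩
  have hgM' : ∀ u, |g u| ≤ M := fun u => (hgM u).trans' <| by
    have hw := one_le_weight hβ hσ0.le ht ‖u‖
    rw [abs_mul, abs_of_nonneg (zero_le_one.trans hw)]
    exact le_mul_of_one_le_left (abs_nonneg _) hw
  set w := (1 + ‖v‖ ^ 2) ^ (β / 2) * Real.exp (σ₀ * ‖v‖ ^ 2 / (1 + t))
  set X := (1 + ‖v‖) ^ γ * |w * f v| * √M * √(∫ u, |g u|)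
  rw [← mul_assoc, abs_mul]
  calc _ ≤ |w * f v| * (3 * Cb * S * (1 + ‖v‖) ^ γ * √M * √K * √(∫ u, |g u|)) := by
        gcongr
        exact abs_integral_le_sqrt_mul_sqrt_integral_abs (by positivity)
          (memLp_two_exp_neg_mul_sq_norm (by norm_num)) (fun _ => (Real.exp_pos _).le) hg hgM'
          fun u => abs_integral_rpow_norm_sub_mul_mul_sqrt_maxwellian_le _ hγ0 hγ1 hCb
            (fun _ => hbd _) v u (g u)
    _ = 3 * Cb * S * √K * X := by ring
    _ ≤ (3 * Cb * S * √K + 1) * X := by gcongr; linarith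
    _ = _ := by ring

/-- Weighted estimate for the loss term (Lemma 2.12, first part):
for `Γ_loss(f,g)(v) = f(v)∫∫ B(v-u,θ)√μ(u) g(u) dω du` with hard cutoff kernel
`B = |v-u|^γ b(cos θ)`, `b` bounded, and weight
`w_β(t,v) = (1+|v|²)^{β/2} e^{σ₀|v|²/(1+t)}` (`β ≥ 0`, `0 < σ₀ ≤ 1/16`),
`|w_β Γ_loss(f,g)(v)| ≤ C ν(v) |w_β f(v)| ‖w_β g‖_∞^{1/2} (∫|g|)^{1/2}`
with `ν(v) ≅ (1+|v|)^γ`. -/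
theorem stmt10 (γ σ₀ β Cb : ℝ) (hγ0 : 0 ≤ γ) (hγ1 : γ ≤ 1)
    (hσ0 : 0 < σ₀) (hσ1 : σ₀ ≤ 1 / 16) (hβ : 0 ≤ β)
    (b : ℝ → ℝ) (hb : Measurable b) (hbd : ∀ r, |b r| ≤ Cb) :
    ∃ C > 0, ∀ t : ℝ, 0 ≤ t →
      ∀ (f g : EuclideanSpace ℝ (Fin 3) → ℝ), Measurable g → Integrable g →
      ∀ M : ℝ, 0 ≤ M →
      (∀ u, |((1 + ‖u‖ ^ 2) ^ (β / 2) * Real.exp (σ₀ * ‖u‖ ^ 2 / (1 + t))) * g u| ≤ M) →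
      ∀ v,
        |((1 + ‖v‖ ^ 2) ^ (β / 2) * Real.exp (σ₀ * ‖v‖ ^ 2 / (1 + t))) *
            (f v * ∫ u : EuclideanSpace ℝ (Fin 3),
              (∫ ω, ‖v - u‖ ^ γ *
                  b ((inner ℝ (v - u) ((ω : EuclideanSpace ℝ (Fin 3))) : ℝ) / ‖v - u‖)
                ∂((volume : Measure (EuclideanSpace ℝ (Fin 3))).toSphere)) *
              (Real.sqrt ((2 * Real.pi) ^ (-(3 : ℝ) / 2) * Real.exp (-‖u‖ ^ 2 / 2)) * g u))|
          ≤ C * (1 + ‖v‖) ^ γ *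
              |((1 + ‖v‖ ^ 2) ^ (β / 2) * Real.exp (σ₀ * ‖v‖ ^ 2 / (1 + t))) * f v| *
              Real.sqrt M * Real.sqrt (∫ u, |g u|) :=
  stmt10_general γ σ₀ β Cb hγ0 hγ1 hσ0 hβ b hbd
end

section
/- Let B : [0,T] → [0,∞) be continuous and satisfy the integral equation B(t) = A + K∫₀ᵗ B(s) ds + K∫₀ᵗ (1 + ln(1+B(s))) B(s) ds, where A ≥ 1 and K > 0. Then B(t) ≤ e^{-1}·((A+1)e)^{exp(2Kt)} − 1 for all t ∈ [0,T]. -/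
/-!
Differentiating the integral equation, `u = log (1 + B)` has right derivative
`K B (2 + u) / (1 + B) ≤ 2K (1 + u)`, because `B / (1 + B) ≤ 1` and `u ≥ 0`. Grönwall's inequality
for this linear bound gives `u t ≤ (log (1 + A) + 1) exp (2Kt) - 1`; exponentiating yields the claim.
-/

open Real Set Filter Topology

theorem le_gronwallBound_of_deriv_right_le {f f' : ℝ → ℝ} {δ K ε a b : ℝ}
    (hf : ContinuousOn f (Icc a b)) (hf' : ∀ x ∈ Ico a b, HasDerivWithinAt f (f' x) (Ici x) x)
    (ha : f a ≤ δ) (bound : ∀ x ∈ Ico a b, f' x ≤ K * f x + ε) :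
    ∀ x ∈ Icc a b, f x ≤ gronwallBound δ K ε (x - a) :=
  le_gronwallBound_of_liminf_deriv_right_le hf
    (fun x hx _ hr => (hf' x hx).liminf_right_slope_le hr) ha bound

theorem gronwallBound_self (δ K x : ℝ) :
    gronwallBound δ K K x = (δ + 1) * exp (K * x) - 1 := by
  rcases eq_or_ne K 0 with rfl | hK
  · simp [gronwallBound_K0]
  · rw [gronwallBound_of_K_ne_0 hK, div_self hK]
    ring

theorem ContinuousOn.integral_hasDerivWithinAt_Ici {E : Type*} [NormedAddCommGroup E]
    [NormedSpace ℝ E] [CompleteSpace E] {f : ℝ → E} {a b t : ℝ}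
    (hf : ContinuousOn f (Icc a b)) (ht : t ∈ Ico a b) :
    HasDerivWithinAt (fun u => ∫ s in a..u, f s) (f t) (Ici t) t := by
  have hnhds : Icc a b ∈ 𝓝[>] t :=
    nhdsWithin_mono t Ioi_subset_Ici_self (Icc_mem_nhdsGE_of_mem ht)
  refine intervalIntegral.integral_hasDerivWithinAt_right
    ((hf.mono ?_).intervalIntegrable) ⟨Icc a b, hnhds, hf.aestronglyMeasurable measurableSet_Icc⟩
    ((hf.continuousWithinAt (Ico_subset_Icc_self ht)).mono_of_mem_nhdsWithin hnhds)
  rw [uIcc_of_le ht.1]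
  exact Icc_subset_Icc_right ht.2.le

theorem inv_one_add_mul_le_two_mul_log_one_add {K b : ℝ} (hK : 0 ≤ K) (hb : 0 ≤ b) :
    (1 + b)⁻¹ * (K * b + K * ((1 + log (1 + b)) * b)) ≤ 2 * K * log (1 + b) + 2 * K := by
  have hlog : 0 ≤ log (1 + b) := log_nonneg (by linarith)
  rw [inv_mul_le_iff₀ (by linarith)]
  nlinarith [mul_nonneg (mul_nonneg hK hlog) hb, mul_nonneg hK hlog, mul_nonneg hK hb]

theorem exp_neg_one_mul_rpow {A x : ℝ} (hA : 0 < A + 1) :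
    exp (-1) * ((A + 1) * exp 1) ^ x = exp ((log (1 + A) + 1) * x - 1) := by
  rw [rpow_def_of_pos (by positivity), log_mul hA.ne' (exp_ne_zero 1), log_exp, ← exp_add,
    add_comm A]
  ring_nf

section IntegralEquation

variable {T A K : ℝ} {B : ℝ → ℝ}

theorem continuousOn_log_one_add (hBc : ContinuousOn B (Icc 0 T))
    (hBnn : ∀ t ∈ Icc 0 T, 0 ≤ B t) : ContinuousOn (fun t => log (1 + B t)) (Icc 0 T) :=
  (continuousOn_const.add hBc).log fun t ht => (by linarith [hBnn t ht] : 0 < 1 + B t).ne'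

theorem hasDerivWithinAt_of_integral_equation (hBc : ContinuousOn B (Icc 0 T))
    (hBnn : ∀ t ∈ Icc 0 T, 0 ≤ B t)
    (hB : ∀ t ∈ Icc 0 T, B t = A + K * (∫ s in (0 : ℝ)..t, B s) +
        K * ∫ s in (0 : ℝ)..t, (1 + log (1 + B s)) * B s)
    {t : ℝ} (ht : t ∈ Ico 0 T) :
    HasDerivWithinAt B (K * B t + K * ((1 + log (1 + B t)) * B t)) (Ici t) t := by
  have hg : ContinuousOn (fun s => (1 + log (1 + B s)) * B s) (Icc 0 T) :=
    (continuousOn_const.add (continuousOn_log_one_add hBc hBnn)).mul hBc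
  have hrhs : HasDerivWithinAt (fun u => A + K * (∫ s in (0 : ℝ)..u, B s) +
      K * ∫ s in (0 : ℝ)..u, (1 + log (1 + B s)) * B s)
      (K * B t + K * ((1 + log (1 + B t)) * B t)) (Ici t) t :=
    (((hBc.integral_hasDerivWithinAt_Ici ht).const_mul K).const_add A).add
      ((hg.integral_hasDerivWithinAt_Ici ht).const_mul K)
  refine hrhs.congr_of_eventuallyEq ?_ (hB t (Ico_subset_Icc_self ht))
  filter_upwards [Icc_mem_nhdsGE_of_mem ht] with s hs using hB s hs

end IntegralEquation

theorem stmt13_general (T A K : ℝ) (hK : 0 < K)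
    (B : ℝ → ℝ) (hBc : ContinuousOn B (Set.Icc 0 T))
    (hBnn : ∀ t ∈ Set.Icc (0 : ℝ) T, 0 ≤ B t)
    (hB : ∀ t ∈ Set.Icc (0 : ℝ) T,
      B t = A + K * (∫ s in (0 : ℝ)..t, B s) +
        K * ∫ s in (0 : ℝ)..t, (1 + Real.log (1 + B s)) * B s) :
    ∀ t ∈ Set.Icc (0 : ℝ) T,
      B t ≤ Real.exp (-1) * ((A + 1) * Real.exp 1) ^ Real.exp (2 * K * t) - 1 := by
  intro t ht
  have h0 : (0 : ℝ) ∈ Icc 0 T := left_mem_Icc.2 (ht.1.trans ht.2)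
  have hB0 : B 0 = A := by simpa using hB 0 h0
  have hpos : ∀ s ∈ Icc 0 T, 0 < 1 + B s := fun s hs => by linarith [hBnn s hs]
  have hlog : log (1 + B t) ≤ gronwallBound (log (1 + A)) (2 * K) (2 * K) (t - 0) := by
    refine le_gronwallBound_of_deriv_right_le (continuousOn_log_one_add hBc hBnn)
      (fun s hs => ((hasDerivWithinAt_of_integral_equation hBc hBnn hB hs).const_add 1).log
        (hpos s (Ico_subset_Icc_self hs)).ne') (by rw [hB0]) (fun s hs => ?_) t ht
    rw [div_eq_inv_mul]
    exact inv_one_add_mul_le_two_mul_log_one_add hK.le (hBnn s (Ico_subset_Icc_self hs))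
  rw [gronwallBound_self, sub_zero] at hlog
  calc B t = exp (log (1 + B t)) - 1 := by rw [exp_log (hpos t ht)]; ring
    _ ≤ exp ((log (1 + A) + 1) * exp (2 * K * t) - 1) - 1 := by gcongr
    _ = _ := by rw [exp_neg_one_mul_rpow (by linarith [hpos 0 h0, hB0])]

/-- Nonlinear (logarithmic) Gronwall estimate: if the continuous nonnegative `B`
satisfies `B(t) = A + K∫₀ᵗ B + K∫₀ᵗ (1 + log(1+B))B` with `A ≥ 1`, `K > 0`, then
`B(t) ≤ e⁻¹((A+1)e)^{exp(2Kt)} - 1` on `[0,T]`. -/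
theorem stmt13 (T A K : ℝ) (hT : 0 ≤ T) (hA : 1 ≤ A) (hK : 0 < K)
    (B : ℝ → ℝ) (hBc : ContinuousOn B (Set.Icc 0 T))
    (hBnn : ∀ t ∈ Set.Icc (0 : ℝ) T, 0 ≤ B t)
    (hB : ∀ t ∈ Set.Icc (0 : ℝ) T,
      B t = A + K * (∫ s in (0 : ℝ)..t, B s) +
        K * ∫ s in (0 : ℝ)..t, (1 + Real.log (1 + B s)) * B s) :
    ∀ t ∈ Set.Icc (0 : ℝ) T,
      B t ≤ Real.exp (-1) * ((A + 1) * Real.exp 1) ^ Real.exp (2 * K * t) - 1 :=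
  stmt13_general T A K hK B hBc hBnn hB
end

section
/- Suppose F : Ω × ℝ³ → [0,∞) (with Ω = 𝕋³) and μ(v) = (2π)^{-3/2}e^{-|v|²/2}, and define f via F = μ + √μ f and h = w f with a weight w(v) ≥ 1. Then for any N ≥ 1 and any measurable set A ⊂ {|u| ≤ 2N} × {|u'| ≤ 3N}, ∫∫_A |f(y,u')|² du' dy ≤ C_N (‖h‖_{L^∞} · E + E), where E := ∫_Ω∫_{ℝ³} [ |F−μ|²/(4μ) 1_{|F−μ|≤μ} + (1/4)|F−μ| 1_{|F−μ|≥μ} ] dv dy. -/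
/-!
On `{|F - μ| ≤ μ}` one has `|f|² = |F - μ|² / μ`, which is four times the quadratic part of the
entropy integrand. On `{|F - μ| ≥ μ}` one interpolates with the `L^∞` bound:
`|f|² ≤ ‖w f‖_∞ |f| ≤ ‖h‖_∞ μ^{-1/2} |F - μ|`, and on `|u'| ≤ 3N` the factor `μ^{-1/2}` is bounded
by a constant depending only on `N`.
-/

open MeasureTheory

/-- The normalized global Maxwellian `μ(v) = (2π)^{-3/2} e^{-|v|²/2}`. -/
noncomputable def maxwellian (u : EuclideanSpace ℝ (Fin 3)) : ℝ :=
  (2 * Real.pi) ^ (-(3 : ℝ) / 2) * Real.exp (-‖u‖ ^ 2 / 2)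

open Real

/-- The minimum of the Maxwellian on the closed ball of radius `R`. -/
noncomputable def maxwellianFloor (R : ℝ) : ℝ :=
  (2 * π) ^ (-(3 : ℝ) / 2) * exp (-R ^ 2 / 2)

lemma maxwellianFloor_pos (R : ℝ) : 0 < maxwellianFloor R := by
  unfold maxwellianFloor; positivity

lemma maxwellianFloor_le_one (R : ℝ) : maxwellianFloor R ≤ 1 := by
  have hπ : (2 * π) ^ (-(3 : ℝ) / 2) ≤ 1 :=
    rpow_le_one_of_one_le_of_nonpos (by linarith [pi_gt_three]) (by norm_num)
  have hexp : exp (-R ^ 2 / 2) ≤ 1 := exp_le_one_iff.mpr (by nlinarith [sq_nonneg R])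
  exact mul_le_one₀ hπ (exp_pos _).le hexp

lemma maxwellian_pos (u : EuclideanSpace ℝ (Fin 3)) : 0 < maxwellian u := by
  unfold maxwellian; positivity

lemma maxwellianFloor_le_maxwellian {u : EuclideanSpace ℝ (Fin 3)} {R : ℝ} (hu : ‖u‖ ≤ R) :
    maxwellianFloor R ≤ maxwellian u := by
  have hsq : ‖u‖ ^ 2 ≤ R ^ 2 := pow_le_pow_left₀ (norm_nonneg u) hu 2
  unfold maxwellianFloor maxwellian
  gcongr

/-- The integrand of the relative-entropy defect, evaluated at `μ` and `d = F - μ`. -/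
noncomputable def defectEntropy (μ d : ℝ) : ℝ :=
  (if |d| ≤ μ then d ^ 2 / (4 * μ) else 0) + (if μ ≤ |d| then |d| / 4 else 0)

section defectEntropy

variable {μ d : ℝ}

lemma defectEntropy_nonneg (hμ : 0 ≤ μ) : 0 ≤ defectEntropy μ d := by
  unfold defectEntropy
  apply add_nonneg <;> split_ifs <;> positivity

lemma sq_div_le_defectEntropy (hd : |d| ≤ μ) :
    d ^ 2 / (4 * μ) ≤ defectEntropy μ d := by
  unfold defectEntropy
  rw [if_pos hd]
  split_ifs <;> linarith [abs_nonneg d]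

lemma abs_div_le_defectEntropy (hμ : 0 ≤ μ) (hd : μ ≤ |d|) : |d| / 4 ≤ defectEntropy μ d := by
  unfold defectEntropy
  rw [if_pos hd]
  have hq : 0 ≤ d ^ 2 / (4 * μ) := by positivity
  split_ifs <;> linarith

lemma sq_le_mul_defectEntropy {f M c : ℝ} (hμ : 0 < μ) (hc : 0 < c) (hc1 : c ≤ 1)
    (hcμ : c ≤ √μ) (hf : |f| ≤ M) :
    f ^ 2 ≤ 4 / c * (M + 1) * defectEntropy μ (√μ * f) := by
  have hM : 0 ≤ M := (abs_nonneg f).trans hf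
  have hE := defectEntropy_nonneg (d := √μ * f) hμ.le
  have hK : 4 ≤ 4 / c := by rw [le_div_iff₀ hc]; linarith
  rcases le_total |√μ * f| μ with hd | hd
  · have hq : f ^ 2 = 4 * ((√μ * f) ^ 2 / (4 * μ)) := by
      rw [mul_pow, sq_sqrt hμ.le]; field_simp
    calc f ^ 2 ≤ 4 * defectEntropy μ (√μ * f) := by
          rw [hq]; gcongr; exact sq_div_le_defectEntropy hd
      _ ≤ 4 / c * (M + 1) * defectEntropy μ (√μ * f) := by
          gcongr; nlinarith
  · have hcf : c * |f| ≤ |√μ * f| := by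
      rw [abs_mul, abs_of_nonneg (sqrt_nonneg μ)]; gcongr
    calc f ^ 2 = |f| * |f| := by rw [← sq_abs, sq]
      _ ≤ (M + 1) * (|√μ * f| / c) := by
          gcongr
          · linarith
          · rwa [le_div_iff₀ hc, mul_comm]
      _ = 4 / c * (M + 1) * (|√μ * f| / 4) := by field_simp
      _ ≤ 4 / c * (M + 1) * defectEntropy μ (√μ * f) := by
          gcongr; exact abs_div_le_defectEntropy hμ.le hd

end defectEntropy

lemma setLIntegral_ofReal_le_mul_of_subset {α : Type*} [MeasurableSpace α] {ν : Measure α}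
    {A S : Set α} {φ ψ : α → ℝ} {K : ℝ} (hA : MeasurableSet A) (hAS : A ⊆ S) (hK : 0 ≤ K)
    (hφψ : ∀ p ∈ A, φ p ≤ K * ψ p) :
    ∫⁻ p in A, ENNReal.ofReal (φ p) ∂ν ≤ ENNReal.ofReal K * ∫⁻ p in S, ENNReal.ofReal (ψ p) ∂ν :=
  calc ∫⁻ p in A, ENNReal.ofReal (φ p) ∂ν
      ≤ ∫⁻ p in A, ENNReal.ofReal K * ENNReal.ofReal (ψ p) ∂ν :=
        setLIntegral_mono' hA fun p hp => by
          rw [← ENNReal.ofReal_mul hK]; exact ENNReal.ofReal_le_ofReal (hφψ p hp)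
    _ = ENNReal.ofReal K * ∫⁻ p in A, ENNReal.ofReal (ψ p) ∂ν :=
        lintegral_const_mul' _ _ ENNReal.ofReal_ne_top
    _ ≤ ENNReal.ofReal K * ∫⁻ p in S, ENNReal.ofReal (ψ p) ∂ν := by
        gcongr

theorem stmt18_general (N : ℝ) :
    ∃ C > 0,
      ∀ (F f : EuclideanSpace ℝ (Fin 3) → EuclideanSpace ℝ (Fin 3) → ℝ)
        (w : EuclideanSpace ℝ (Fin 3) → ℝ) (M : ℝ),
        (∀ y u, 0 ≤ F y u) →
        (∀ y u, F y u = maxwellian u + Real.sqrt (maxwellian u) * f y u) →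
        (∀ u, 1 ≤ w u) →
        0 ≤ M →
        (∀ y u, |w u * f y u| ≤ M) →
        ∀ A : Set (EuclideanSpace ℝ (Fin 3) × EuclideanSpace ℝ (Fin 3)),
          MeasurableSet A →
          A ⊆ ({x : EuclideanSpace ℝ (Fin 3) | ∀ i, |x i| ≤ 1 / 2} ×ˢ
                Metric.closedBall (0 : EuclideanSpace ℝ (Fin 3)) (3 * N)) →
          (∫⁻ p in A, ENNReal.ofReal ((f p.1 p.2) ^ 2)) ≤
            (ENNReal.ofReal (C * M) + ENNReal.ofReal C) *
              ∫⁻ p in ({x : EuclideanSpace ℝ (Fin 3) | ∀ i, |x i| ≤ 1 / 2} ×ˢ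
                  (Set.univ : Set (EuclideanSpace ℝ (Fin 3)))),
                ENNReal.ofReal
                  ((if |F p.1 p.2 - maxwellian p.2| ≤ maxwellian p.2 then
                      (F p.1 p.2 - maxwellian p.2) ^ 2 / (4 * maxwellian p.2) else 0) +
                   (if maxwellian p.2 ≤ |F p.1 p.2 - maxwellian p.2| then
                      |F p.1 p.2 - maxwellian p.2| / 4 else 0)) := by
  set c := √(maxwellianFloor (3 * N))
  have hc : 0 < c := sqrt_pos.mpr (maxwellianFloor_pos _)
  have hc1 : c ≤ 1 := sqrt_le_one.mpr (maxwellianFloor_le_one _)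
  refine ⟨4 / c, by positivity, fun F f w M _ hFf hw hM hh A hA hAsub => ?_⟩
  rw [← ENNReal.ofReal_add (by positivity) (by positivity)]
  refine setLIntegral_ofReal_le_mul_of_subset hA
    (hAsub.trans (Set.prod_mono le_rfl (Set.subset_univ _))) (by positivity) fun p hp => ?_
  have hu : ‖p.2‖ ≤ 3 * N := mem_closedBall_zero_iff.mp (hAsub hp).2
  have hf : |f p.1 p.2| ≤ M := by
    calc |f p.1 p.2| ≤ |w p.2| * |f p.1 p.2| :=
          le_mul_of_one_le_left (abs_nonneg _) ((hw p.2).trans (le_abs_self _))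
      _ ≤ M := by rw [← abs_mul]; exact hh _ _
  have key := sq_le_mul_defectEntropy (maxwellian_pos p.2) hc hc1
    (sqrt_le_sqrt (maxwellianFloor_le_maxwellian hu)) hf
  rw [show √(maxwellian p.2) * f p.1 p.2 = F p.1 p.2 - maxwellian p.2 by rw [hFf]; ring] at key
  convert key using 1
  simp only [defectEntropy]; ring

/-- Relative-entropy interpolation (Eq. (3.26)): with `F = μ + √μ f ≥ 0`,
`h = w f`, `w ≥ 1`, `‖h‖_∞ ≤ M`, for any measurable
`A ⊆ Ω × {|u'| ≤ 3N}` (Ω the fundamental cube of `𝕋³`),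
`∫∫_A |f(y,u')|² du' dy ≤ C_N(‖h‖_∞ E + E)` where `E` is the defect-entropy
quantity of Lemma 2.3. -/
theorem stmt18 (N : ℝ) (hN : 1 ≤ N) :
    ∃ C > 0,
      ∀ (F f : EuclideanSpace ℝ (Fin 3) → EuclideanSpace ℝ (Fin 3) → ℝ)
        (w : EuclideanSpace ℝ (Fin 3) → ℝ) (M : ℝ),
        (∀ y u, 0 ≤ F y u) →
        (∀ y u, F y u = maxwellian u + Real.sqrt (maxwellian u) * f y u) →
        (∀ u, 1 ≤ w u) →
        0 ≤ M →
        (∀ y u, |w u * f y u| ≤ M) →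
        ∀ A : Set (EuclideanSpace ℝ (Fin 3) × EuclideanSpace ℝ (Fin 3)),
          MeasurableSet A →
          A ⊆ ({x : EuclideanSpace ℝ (Fin 3) | ∀ i, |x i| ≤ 1 / 2} ×ˢ
                Metric.closedBall (0 : EuclideanSpace ℝ (Fin 3)) (3 * N)) →
          (∫⁻ p in A, ENNReal.ofReal ((f p.1 p.2) ^ 2)) ≤
            (ENNReal.ofReal (C * M) + ENNReal.ofReal C) *
              ∫⁻ p in ({x : EuclideanSpace ℝ (Fin 3) | ∀ i, |x i| ≤ 1 / 2} ×ˢ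
                  (Set.univ : Set (EuclideanSpace ℝ (Fin 3)))),
                ENNReal.ofReal
                  ((if |F p.1 p.2 - maxwellian p.2| ≤ maxwellian p.2 then
                      (F p.1 p.2 - maxwellian p.2) ^ 2 / (4 * maxwellian p.2) else 0) +
                   (if maxwellian p.2 ≤ |F p.1 p.2 - maxwellian p.2| then
                      |F p.1 p.2 - maxwellian p.2| / 4 else 0)) :=
  stmt18_general N
end
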